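/- arXiv:2202.11373 — 6 statements merged into one kernel-verified Lean document; each statement's English description precedes it below -/
import Mathlib

section
/- Let u₀, u₁, u₂, u₃ be nonzero vectors in a real inner product space such that ‖u₀‖ = ‖u₀+u₁‖ = ‖u₀+u₂‖ = ‖u₀+u₃‖, and each of the quantities ‖u₀+u₁+u₂‖, ‖u₀+u₁+u₃‖, ‖u₀+u₂+u₃‖, ‖u₀+u₁+u₂+u₃‖ is equal either to 0 or to ‖u₀‖. Then ‖u₀+u₁+u₂+u₃‖ = ‖u₀‖. -/
open scoped RealInnerProductSpace

theorem stmt_3 {H : Type*} [NormedAddCommGroup H] [InnerProductSpace ℝ H]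
    (u₀ u₁ u₂ u₃ : H) (h₀ : u₀ ≠ 0) (h₁ : u₁ ≠ 0) (h₂ : u₂ ≠ 0) (h₃ : u₃ ≠ 0)
    (e₁ : ‖u₀‖ = ‖u₀ + u₁‖) (e₂ : ‖u₀‖ = ‖u₀ + u₂‖) (e₃ : ‖u₀‖ = ‖u₀ + u₃‖)
    (f₁ : ‖u₀ + u₁ + u₂‖ = 0 ∨ ‖u₀ + u₁ + u₂‖ = ‖u₀‖)
    (f₂ : ‖u₀ + u₁ + u₃‖ = 0 ∨ ‖u₀ + u₁ + u₃‖ = ‖u₀‖)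
    (f₃ : ‖u₀ + u₂ + u₃‖ = 0 ∨ ‖u₀ + u₂ + u₃‖ = ‖u₀‖)
    (f₄ : ‖u₀ + u₁ + u₂ + u₃‖ = 0 ∨ ‖u₀ + u₁ + u₂ + u₃‖ = ‖u₀‖) :
    ‖u₀ + u₁ + u₂ + u₃‖ = ‖u₀‖ := by
  rcases f₄ with h | h
  · exfalso
    have hz : u₀ + u₁ + u₂ + u₃ = 0 := norm_eq_zero.mp h
    have a3 : u₀ + u₁ + u₂ = -u₃ := by
      rw [eq_neg_iff_add_eq_zero]; exact hz
    have a2 : u₀ + u₁ + u₃ = -u₂ := by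
      rw [eq_neg_iff_add_eq_zero, ← hz]; abel
    have a1 : u₀ + u₂ + u₃ = -u₁ := by
      rw [eq_neg_iff_add_eq_zero, ← hz]; abel
    have k3 : ‖u₃‖ = ‖u₀‖ := by
      rcases f₁ with h1 | h1
      · exact absurd (neg_eq_zero.mp (norm_eq_zero.mp (by rwa [a3] at h1))) h₃
      · rw [← h1, a3, norm_neg]
    have k2 : ‖u₂‖ = ‖u₀‖ := by
      rcases f₂ with h1 | h1
      · exact absurd (neg_eq_zero.mp (norm_eq_zero.mp (by rwa [a2] at h1))) h₂
      · rw [← h1, a2, norm_neg]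
    have k1 : ‖u₁‖ = ‖u₀‖ := by
      rcases f₃ with h1 | h1
      · exact absurd (neg_eq_zero.mp (norm_eq_zero.mp (by rwa [a1] at h1))) h₁
      · rw [← h1, a1, norm_neg]
    have q1 : ‖u₀ + u₁‖ ^ 2 = ‖u₀‖ ^ 2 + 2 * ⟪u₀, u₁⟫ + ‖u₁‖ ^ 2 := norm_add_sq_real u₀ u₁
    have q2 : ‖u₀ + u₂‖ ^ 2 = ‖u₀‖ ^ 2 + 2 * ⟪u₀, u₂⟫ + ‖u₂‖ ^ 2 := norm_add_sq_real u₀ u₂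
    have q3 : ‖u₀ + u₃‖ ^ 2 = ‖u₀‖ ^ 2 + 2 * ⟪u₀, u₃⟫ + ‖u₃‖ ^ 2 := norm_add_sq_real u₀ u₃
    have hs : u₁ + u₂ + u₃ = -u₀ := by
      rw [eq_neg_iff_add_eq_zero, ← hz]; abel
    have qs : ⟪u₀, u₁ + u₂ + u₃⟫ = -‖u₀‖ ^ 2 := by
      rw [hs, inner_neg_right, real_inner_self_eq_norm_sq]
    rw [inner_add_right, inner_add_right] at qs
    have hn : ‖u₀‖ ≠ 0 := norm_ne_zero_iff.mpr h₀
    rw [← e₁, k1] at q1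
    rw [← e₂, k2] at q2
    rw [← e₃, k3] at q3
    have hp : 0 < ‖u₀‖ ^ 2 := by positivity
    linarith
  · exact h
end

section
/- Let u₀, u₁, u₂, u₃ be nonzero vectors in a real inner product space such that ‖u₀‖ = ‖u₀+u₁‖ = ‖u₀+u₂‖ = ‖u₀+u₃‖, and each of ‖u₀+u₁+u₂‖, ‖u₀+u₁+u₃‖, ‖u₀+u₂+u₃‖, ‖u₀+u₁+u₂+u₃‖ equals either 0 or ‖u₀‖. Then all four of these norms equal ‖u₀‖. -/
open scoped RealInnerProductSpace

/-- If a triple sum vanishes, we get a contradiction. -/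
private lemma aux_triple {H : Type*} [NormedAddCommGroup H] [InnerProductSpace ℝ H]
    (u₀ u₁ u₂ u₃ : H) (h₃ : u₃ ≠ 0)
    (e₁ : ‖u₀‖ = ‖u₀ + u₁‖) (e₂ : ‖u₀‖ = ‖u₀ + u₂‖) (e₃ : ‖u₀‖ = ‖u₀ + u₃‖)
    (f₂ : ‖u₀ + u₁ + u₃‖ = 0 ∨ ‖u₀ + u₁ + u₃‖ = ‖u₀‖)
    (f₃ : ‖u₀ + u₂ + u₃‖ = 0 ∨ ‖u₀ + u₂ + u₃‖ = ‖u₀‖)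
    (f₄ : ‖u₀ + u₁ + u₂ + u₃‖ = 0 ∨ ‖u₀ + u₁ + u₂ + u₃‖ = ‖u₀‖)
    (hz : u₀ + u₁ + u₂ = 0) : False := by
  have hquad : u₀ + u₁ + u₂ + u₃ = u₃ := by rw [hz, zero_add]
  have hv2 : u₀ + u₁ + u₃ = u₃ - u₂ := by
    rw [eq_sub_iff_add_eq, show u₀ + u₁ + u₃ + u₂ = u₀ + u₁ + u₂ + u₃ from by abel, hquad]
  have hv3 : u₀ + u₂ + u₃ = u₃ - u₁ := by
    rw [eq_sub_iff_add_eq, show u₀ + u₂ + u₃ + u₁ = u₀ + u₁ + u₂ + u₃ from by abel, hquad]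
  rw [hquad] at f₄
  have hn3 : ‖u₃‖ = ‖u₀‖ := f₄.resolve_left (norm_ne_zero_iff.mpr h₃)
  have hn0pos : (0:ℝ) < ‖u₀‖ ^ 2 := by
    have : (0:ℝ) < ‖u₃‖ := norm_pos_iff.mpr h₃
    rw [hn3] at this; positivity
  rw [hv2] at f₂
  rw [hv3] at f₃
  have A1 : ‖u₀‖^2 = ‖u₀‖^2 + 2 * ⟪u₀, u₁⟫ + ‖u₁‖^2 := by rw [← norm_add_sq_real, ← e₁]
  have A2 : ‖u₀‖^2 = ‖u₀‖^2 + 2 * ⟪u₀, u₂⟫ + ‖u₂‖^2 := by rw [← norm_add_sq_real, ← e₂]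
  have A3 : ‖u₀‖^2 = ‖u₀‖^2 + 2 * ⟪u₀, u₃⟫ + ‖u₃‖^2 := by rw [← norm_add_sq_real, ← e₃]
  have B0 : ‖u₀‖^2 + ⟪u₀, u₁⟫ + ⟪u₀, u₂⟫ = 0 := by
    have := congrArg (fun v : H => ⟪v, u₀⟫) hz
    simpa [inner_add_left, real_inner_self_eq_norm_sq, real_inner_comm u₁ u₀,
      real_inner_comm u₂ u₀, add_assoc] using this
  have B1 : ⟪u₀, u₁⟫ + ‖u₁‖^2 + ⟪u₁, u₂⟫ = 0 := by
    have := congrArg (fun v : H => ⟪v, u₁⟫) hz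
    simpa [inner_add_left, real_inner_self_eq_norm_sq, real_inner_comm u₂ u₁,
      add_assoc] using this
  have B2 : ⟪u₀, u₂⟫ + ⟪u₁, u₂⟫ + ‖u₂‖^2 = 0 := by
    have := congrArg (fun v : H => ⟪v, u₂⟫) hz
    simpa [inner_add_left, real_inner_self_eq_norm_sq, add_assoc] using this
  have B3 : ⟪u₀, u₃⟫ + ⟪u₁, u₃⟫ + ⟪u₂, u₃⟫ = 0 := by
    have := congrArg (fun v : H => ⟪v, u₃⟫) hz
    simpa [inner_add_left, add_assoc] using this
  have C : ‖u₃‖^2 = ‖u₀‖^2 := by rw [hn3]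
  have F2 : ‖u₃‖^2 - 2 * ⟪u₂, u₃⟫ + ‖u₂‖^2 = 0 ∨
      ‖u₃‖^2 - 2 * ⟪u₂, u₃⟫ + ‖u₂‖^2 = ‖u₀‖^2 := by
    rcases f₂ with h | h
    · left
      have : ‖u₃ - u₂‖^2 = 0 := by rw [h]; ring
      rw [norm_sub_sq_real] at this
      linarith [real_inner_comm u₃ u₂]
    · right
      have : ‖u₃ - u₂‖^2 = ‖u₀‖^2 := by rw [h]
      rw [norm_sub_sq_real] at this
      linarith [real_inner_comm u₃ u₂]
  have F3 : ‖u₃‖^2 - 2 * ⟪u₁, u₃⟫ + ‖u₁‖^2 = 0 ∨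
      ‖u₃‖^2 - 2 * ⟪u₁, u₃⟫ + ‖u₁‖^2 = ‖u₀‖^2 := by
    rcases f₃ with h | h
    · left
      have : ‖u₃ - u₁‖^2 = 0 := by rw [h]; ring
      rw [norm_sub_sq_real] at this
      linarith [real_inner_comm u₃ u₁]
    · right
      have : ‖u₃ - u₁‖^2 = ‖u₀‖^2 := by rw [h]
      rw [norm_sub_sq_real] at this
      linarith [real_inner_comm u₃ u₁]
  rcases F2 with h2 | h2 <;> rcases F3 with h3 | h3 <;>
    linarith [A1, A2, A3, B0, B1, B2, B3, C, hn0pos]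

/-- If the quadruple sum vanishes, we get a contradiction. -/
private lemma aux_quad {H : Type*} [NormedAddCommGroup H] [InnerProductSpace ℝ H]
    (u₀ u₁ u₂ u₃ : H) (h₁ : u₁ ≠ 0) (h₂ : u₂ ≠ 0) (h₃ : u₃ ≠ 0)
    (e₁ : ‖u₀‖ = ‖u₀ + u₁‖) (e₂ : ‖u₀‖ = ‖u₀ + u₂‖) (e₃ : ‖u₀‖ = ‖u₀ + u₃‖)
    (f₁ : ‖u₀ + u₁ + u₂‖ = 0 ∨ ‖u₀ + u₁ + u₂‖ = ‖u₀‖)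
    (f₂ : ‖u₀ + u₁ + u₃‖ = 0 ∨ ‖u₀ + u₁ + u₃‖ = ‖u₀‖)
    (f₃ : ‖u₀ + u₂ + u₃‖ = 0 ∨ ‖u₀ + u₂ + u₃‖ = ‖u₀‖)
    (hz : u₀ + u₁ + u₂ + u₃ = 0) : False := by
  have hv1 : u₀ + u₁ + u₂ = -u₃ := by
    rw [eq_neg_iff_add_eq_zero, hz]
  have hv2 : u₀ + u₁ + u₃ = -u₂ := by
    rw [eq_neg_iff_add_eq_zero, show u₀ + u₁ + u₃ + u₂ = u₀ + u₁ + u₂ + u₃ from by abel, hz]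
  have hv3 : u₀ + u₂ + u₃ = -u₁ := by
    rw [eq_neg_iff_add_eq_zero, show u₀ + u₂ + u₃ + u₁ = u₀ + u₁ + u₂ + u₃ from by abel, hz]
  rw [hv1, norm_neg] at f₁
  rw [hv2, norm_neg] at f₂
  rw [hv3, norm_neg] at f₃
  have hn3 : ‖u₃‖ = ‖u₀‖ := f₁.resolve_left (norm_ne_zero_iff.mpr h₃)
  have hn2 : ‖u₂‖ = ‖u₀‖ := f₂.resolve_left (norm_ne_zero_iff.mpr h₂)
  have hn1 : ‖u₁‖ = ‖u₀‖ := f₃.resolve_left (norm_ne_zero_iff.mpr h₁)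
  have hn0pos : (0:ℝ) < ‖u₀‖ ^ 2 := by
    have : (0:ℝ) < ‖u₃‖ := norm_pos_iff.mpr h₃
    rw [hn3] at this; positivity
  have A1 : ‖u₀‖^2 = ‖u₀‖^2 + 2 * ⟪u₀, u₁⟫ + ‖u₁‖^2 := by rw [← norm_add_sq_real, ← e₁]
  have A2 : ‖u₀‖^2 = ‖u₀‖^2 + 2 * ⟪u₀, u₂⟫ + ‖u₂‖^2 := by rw [← norm_add_sq_real, ← e₂]
  have A3 : ‖u₀‖^2 = ‖u₀‖^2 + 2 * ⟪u₀, u₃⟫ + ‖u₃‖^2 := by rw [← norm_add_sq_real, ← e₃]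
  have B0 : ‖u₀‖^2 + ⟪u₀, u₁⟫ + ⟪u₀, u₂⟫ + ⟪u₀, u₃⟫ = 0 := by
    have := congrArg (fun v : H => ⟪v, u₀⟫) hz
    simpa [inner_add_left, real_inner_self_eq_norm_sq, real_inner_comm u₁ u₀,
      real_inner_comm u₂ u₀, real_inner_comm u₃ u₀, add_assoc] using this
  have B1 : ⟪u₀, u₁⟫ + ‖u₁‖^2 + ⟪u₁, u₂⟫ + ⟪u₁, u₃⟫ = 0 := by
    have := congrArg (fun v : H => ⟪v, u₁⟫) hz
    simpa [inner_add_left, real_inner_self_eq_norm_sq, real_inner_comm u₂ u₁,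
      real_inner_comm u₃ u₁, add_assoc] using this
  have B2 : ⟪u₀, u₂⟫ + ⟪u₁, u₂⟫ + ‖u₂‖^2 + ⟪u₂, u₃⟫ = 0 := by
    have := congrArg (fun v : H => ⟪v, u₂⟫) hz
    simpa [inner_add_left, real_inner_self_eq_norm_sq, real_inner_comm u₃ u₂,
      add_assoc] using this
  have B3 : ⟪u₀, u₃⟫ + ⟪u₁, u₃⟫ + ⟪u₂, u₃⟫ + ‖u₃‖^2 = 0 := by
    have := congrArg (fun v : H => ⟪v, u₃⟫) hz
    simpa [inner_add_left, real_inner_self_eq_norm_sq, add_assoc] using this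
  have C1 : ‖u₁‖^2 = ‖u₀‖^2 := by rw [hn1]
  have C2 : ‖u₂‖^2 = ‖u₀‖^2 := by rw [hn2]
  have C3 : ‖u₃‖^2 = ‖u₀‖^2 := by rw [hn3]
  linarith [A1, A2, A3, B0, B1, B2, B3, C1, C2, C3, hn0pos]

theorem stmt_4 {H : Type*} [NormedAddCommGroup H] [InnerProductSpace ℝ H]
    (u₀ u₁ u₂ u₃ : H) (h₀ : u₀ ≠ 0) (h₁ : u₁ ≠ 0) (h₂ : u₂ ≠ 0) (h₃ : u₃ ≠ 0)
    (e₁ : ‖u₀‖ = ‖u₀ + u₁‖) (e₂ : ‖u₀‖ = ‖u₀ + u₂‖) (e₃ : ‖u₀‖ = ‖u₀ + u₃‖)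
    (f₁ : ‖u₀ + u₁ + u₂‖ = 0 ∨ ‖u₀ + u₁ + u₂‖ = ‖u₀‖)
    (f₂ : ‖u₀ + u₁ + u₃‖ = 0 ∨ ‖u₀ + u₁ + u₃‖ = ‖u₀‖)
    (f₃ : ‖u₀ + u₂ + u₃‖ = 0 ∨ ‖u₀ + u₂ + u₃‖ = ‖u₀‖)
    (f₄ : ‖u₀ + u₁ + u₂ + u₃‖ = 0 ∨ ‖u₀ + u₁ + u₂ + u₃‖ = ‖u₀‖) :
    ‖u₀ + u₁ + u₂‖ = ‖u₀‖ ∧ ‖u₀ + u₁ + u₃‖ = ‖u₀‖ ∧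
      ‖u₀ + u₂ + u₃‖ = ‖u₀‖ ∧ ‖u₀ + u₁ + u₂ + u₃‖ = ‖u₀‖ := by
  -- rewritten forms of the hypotheses, for permuted applications of aux_triple
  have g1 : ‖u₀ + u₂ + u₁‖ = 0 ∨ ‖u₀ + u₂ + u₁‖ = ‖u₀‖ := by
    rwa [add_right_comm u₀ u₂ u₁]
  have g2 : ‖u₀ + u₃ + u₁‖ = 0 ∨ ‖u₀ + u₃ + u₁‖ = ‖u₀‖ := by
    rwa [add_right_comm u₀ u₃ u₁]
  have g3 : ‖u₀ + u₃ + u₂‖ = 0 ∨ ‖u₀ + u₃ + u₂‖ = ‖u₀‖ := by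
    rwa [add_right_comm u₀ u₃ u₂]
  have g4 : ‖u₀ + u₁ + u₃ + u₂‖ = 0 ∨ ‖u₀ + u₁ + u₃ + u₂‖ = ‖u₀‖ := by
    rwa [show u₀ + u₁ + u₃ + u₂ = u₀ + u₁ + u₂ + u₃ from by abel]
  have g5 : ‖u₀ + u₂ + u₃ + u₁‖ = 0 ∨ ‖u₀ + u₂ + u₃ + u₁‖ = ‖u₀‖ := by
    rwa [show u₀ + u₂ + u₃ + u₁ = u₀ + u₁ + u₂ + u₃ from by abel]
  have t1 : ‖u₀ + u₁ + u₂‖ = ‖u₀‖ := by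
    refine f₁.resolve_left fun h => ?_
    exact aux_triple u₀ u₁ u₂ u₃ h₃ e₁ e₂ e₃ f₂ f₃ f₄ (norm_eq_zero.mp h)
  have t2 : ‖u₀ + u₁ + u₃‖ = ‖u₀‖ := by
    refine f₂.resolve_left fun h => ?_
    exact aux_triple u₀ u₁ u₃ u₂ h₂ e₁ e₃ e₂ f₁ g3 g4 (norm_eq_zero.mp h)
  have t3 : ‖u₀ + u₂ + u₃‖ = ‖u₀‖ := by
    refine f₃.resolve_left fun h => ?_
    exact aux_triple u₀ u₂ u₃ u₁ h₁ e₂ e₃ e₁ g1 g2 g5 (norm_eq_zero.mp h)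
  have t4 : ‖u₀ + u₁ + u₂ + u₃‖ = ‖u₀‖ := by
    refine f₄.resolve_left fun h => ?_
    exact aux_quad u₀ u₁ u₂ u₃ h₁ h₂ h₃ e₁ e₂ e₃ f₁ f₂ f₃ (norm_eq_zero.mp h)
  exact ⟨t1, t2, t3, t4⟩
end

section
/- Let u₀ be a nonzero vector in a real inner product space and let (u_j)_{j∈J} be a family of nonzero vectors indexed by a set J with at least three elements, such that ‖u₀ + u_j‖ = ‖u₀‖ for all j ∈ J. Suppose that for every finite subset K of J, ‖u₀ + ∑_{j∈K} u_j‖ equals either 0 or ‖u₀‖. Then ‖u₀ + ∑_{j∈K} u_j‖ = ‖u₀‖ for every finite subset K of J. -/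
open scoped RealInnerProductSpace

theorem stmt_5 {H : Type*} [NormedAddCommGroup H] [InnerProductSpace ℝ H]
    {J : Type*} (u₀ : H) (hu₀ : u₀ ≠ 0) (u : J → H)
    (hcard : ∃ a b c : J, a ≠ b ∧ a ≠ c ∧ b ≠ c)
    (hnz : ∀ j, u j ≠ 0)
    (hone : ∀ j, ‖u₀ + u j‖ = ‖u₀‖)
    (hK : ∀ K : Finset J, ‖u₀ + ∑ j ∈ K, u j‖ = 0 ∨ ‖u₀ + ∑ j ∈ K, u j‖ = ‖u₀‖) :
    ∀ K : Finset J, ‖u₀ + ∑ j ∈ K, u j‖ = ‖u₀‖ := by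
  classical
  have hn0 : (0:ℝ) < ‖u₀‖^2 := pow_pos (norm_pos_iff.mpr hu₀) 2
  have key : ∀ j, 2 * ⟪u₀, u j⟫ = -‖u j‖^2 := by
    intro j
    have h2 : ‖u₀ + u j‖^2 = ‖u₀‖^2 := by rw [hone j]
    rw [norm_add_sq_real] at h2
    linarith
  intro K
  rcases hK K with h0 | h1
  · exfalso
    rw [norm_eq_zero] at h0
    have hsum : ∑ j ∈ K, u j = -u₀ := eq_neg_of_add_eq_zero_left (by rw [add_comm]; exact h0)
    -- norms of elements of K
    have hnormK : ∀ i ∈ K, ‖u i‖ = ‖u₀‖ := by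
      intro i hi
      have hs : u₀ + ∑ j ∈ K.erase i, u j = -u i := by
        have h := Finset.add_sum_erase K u hi
        rw [hsum] at h
        have : ∑ j ∈ K.erase i, u j = -u₀ - u i := by
          rw [eq_sub_iff_add_eq, ← h]; abel
        rw [this]; abel
      rcases hK (K.erase i) with h | h
      · rw [hs, norm_neg, norm_eq_zero] at h
        exact absurd h (hnz i)
      · rw [hs, norm_neg] at h; exact h
    -- card of K is 2
    have hinner : ∑ j ∈ K, ⟪u₀, u j⟫ = -‖u₀‖^2 := by
      rw [← inner_sum, hsum, inner_neg_right, real_inner_self_eq_norm_sq]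
    have hconst : ∑ j ∈ K, ⟪u₀, u j⟫ = ∑ j ∈ K, (-(‖u₀‖^2)/2) := by
      refine Finset.sum_congr rfl fun j hj => ?_
      have h1 := key j
      have h2 := hnormK j hj
      rw [h2] at h1
      linarith
    rw [hconst, Finset.sum_const, nsmul_eq_mul] at hinner
    have hcard2 : K.card = 2 := by
      have : (K.card : ℝ) = 2 := by
        have h2 : ((K.card : ℝ) - 2) * (‖u₀‖^2 / 2) = 0 := by linarith
        rcases mul_eq_zero.mp h2 with h | h
        · linarith
        · linarith
      exact_mod_cast this
    obtain ⟨a, b, hab, hKab⟩ := Finset.card_eq_two.mp hcard2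
    rw [hKab, Finset.sum_pair hab] at hsum
    -- find c distinct from a and b
    obtain ⟨c, hca, hcb⟩ : ∃ c, c ≠ a ∧ c ≠ b := by
      obtain ⟨x, y, z, hxy, hxz, hyz⟩ := hcard
      by_contra hc
      push_neg at hc
      have hx : x = a ∨ x = b := by
        rcases eq_or_ne x a with h | h
        · exact Or.inl h
        · exact Or.inr (hc x h)
      have hy : y = a ∨ y = b := by
        rcases eq_or_ne y a with h | h
        · exact Or.inl h
        · exact Or.inr (hc y h)
      have hz : z = a ∨ z = b := by
        rcases eq_or_ne z a with h | h
        · exact Or.inl h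
        · exact Or.inr (hc z h)
      rcases hx with hx | hx <;> rcases hy with hy | hy <;> rcases hz with hz | hz <;>
        simp_all
    -- expansion lemma
    have expand : ∀ i, ‖u₀ + (u i + u c)‖^2 = ‖u₀‖^2 + 2*⟪u i, u c⟫ := by
      intro i
      have h1 : ‖(u₀ + u i) + u c‖^2
          = ‖u₀ + u i‖^2 + 2*⟪u₀ + u i, u c⟫ + ‖u c‖^2 := norm_add_sq_real _ _
      rw [inner_add_left, hone i] at h1
      have h2 := key c
      have h3 : u₀ + (u i + u c) = (u₀ + u i) + u c := by abel
      rw [h3]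
      linarith
    have hle : ∀ i, i ≠ c → ⟪u i, u c⟫ ≤ 0 := by
      intro i hic
      have hs : ∑ j ∈ ({i, c} : Finset J), u j = u i + u c := Finset.sum_pair hic
      rcases hK ({i, c} : Finset J) with h | h <;> rw [hs] at h
      · have : ‖u₀ + (u i + u c)‖^2 = 0 := by rw [h]; ring
        rw [expand i] at this
        linarith
      · have : ‖u₀ + (u i + u c)‖^2 = ‖u₀‖^2 := by rw [h]
        rw [expand i] at this
        linarith
    have hac := hle a hca.symm
    have hbc := hle b hcb.symm
    have hsumc : ⟪u a, u c⟫ + ⟪u b, u c⟫ = ‖u c‖^2 / 2 := by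
      have h1 : ⟪u a + u b, u c⟫ = ⟪-u₀, u c⟫ := by rw [hsum]
      rw [inner_add_left, inner_neg_left] at h1
      have h2 := key c
      linarith
    have hc0 : (0:ℝ) < ‖u c‖^2 := pow_pos (norm_pos_iff.mpr (hnz c)) 2
    linarith
  · exact h1
end

section
/- Let (Ω, μ) be a probability space, 1 ≤ p ≤ ∞ with p ≠ 2, and let φ : Ω → ℂ be a measurable function such that there exist C > 0 and a measurable set E with μ(E) > 0 and |φ(ω)| = C for ω ∈ E, φ(ω) = 0 for ω ∉ E. Then for every bounded measurable f : Ω → ℂ with ∫ f·conj(φ) dμ = 0, one has ‖φ‖_{L^p} ≤ ‖φ + f‖_{L^p}. -/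
open MeasureTheory
open scoped ENNReal

/-!
Write `g = φ + f` and `|φ| = C·1_E`. Orthogonality gives `∫_E conj φ · g = ∫ |φ|² = C² μ(E)`, so
`C μ(E) ≤ ∫_E |g| ≤ ‖g‖_p μ(E)^(1 - 1/p)` by Hölder on `E`, while `‖φ‖_p = C μ(E)^(1/p)`.
Dividing by `μ(E)^(1 - 1/p)` gives `‖φ‖_p ≤ ‖g‖_p`.
-/

namespace OrthogonalIndicator

variable {Ω : Type*} [MeasurableSpace Ω] {μ : Measure Ω} {φ f : Ω → ℂ} {C : ℝ} {E : Set Ω}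

theorem eLpNorm_le_of_norm_eq_on (hOn : ∀ ω ∈ E, ‖φ ω‖ = C) (hOff : ∀ ω ∉ E, φ ω = 0)
    (p : ℝ≥0∞) : eLpNorm φ p μ ≤ ‖C‖ₑ * μ E ^ (1 / p.toReal) := by
  have hnorm : ∀ ω, ‖φ ω‖ = ‖E.indicator (fun _ => C) ω‖ := by
    intro ω
    by_cases hω : ω ∈ E
    · rw [Set.indicator_of_mem hω, hOn ω hω, Real.norm_of_nonneg (hOn ω hω ▸ norm_nonneg _)]
    · simp [hω, hOff ω hω]
  rw [eLpNorm_congr_norm_ae (ae_of_all _ hnorm)]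
  exact eLpNorm_indicator_const_le C p

theorem setIntegral_conj_mul_add [IsFiniteMeasure μ] (hE : MeasurableSet E)
    (hOn : ∀ ω ∈ E, ‖φ ω‖ = C) (hOff : ∀ ω ∉ E, φ ω = 0)
    (hint : Integrable (fun ω => f ω * starRingEnd ℂ (φ ω)) μ)
    (horth : ∫ ω, f ω * starRingEnd ℂ (φ ω) ∂μ = 0) :
    ∫ ω in E, starRingEnd ℂ (φ ω) * (φ ω + f ω) ∂μ = ((C ^ 2 * μ.real E : ℝ) : ℂ) := by
  have hsq : Set.EqOn (fun _ => ((C ^ 2 : ℝ) : ℂ)) (fun ω => starRingEnd ℂ (φ ω) * φ ω) E := by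
    intro ω hω
    simp only [mul_comm (starRingEnd ℂ _), Complex.mul_conj, Complex.normSq_eq_norm_sq, hOn ω hω]
  have hcross : ∫ ω in E, starRingEnd ℂ (φ ω) * f ω ∂μ = 0 := by
    simp_rw [mul_comm (starRingEnd ℂ _)]
    rw [setIntegral_eq_integral_of_forall_compl_eq_zero fun ω hω => by simp [hOff ω hω]]
    exact horth
  simp_rw [mul_add]
  rw [integral_add ((integrableOn_const (measure_ne_top μ E)).congr_fun hsq hE)
    (by simpa only [mul_comm] using hint.restrict), hcross, add_zero,
    ← setIntegral_congr_fun hE hsq, setIntegral_const, Complex.real_smul]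
  push_cast
  ring

theorem enorm_mul_measure_le_setLIntegral_enorm_add [IsFiniteMeasure μ] (hE : MeasurableSet E)
    (hOn : ∀ ω ∈ E, ‖φ ω‖ = C) (hOff : ∀ ω ∉ E, φ ω = 0) (hC : C ≠ 0)
    (hint : Integrable (fun ω => f ω * starRingEnd ℂ (φ ω)) μ)
    (horth : ∫ ω, f ω * starRingEnd ℂ (φ ω) ∂μ = 0) :
    ‖C‖ₑ * μ E ≤ ∫⁻ ω in E, ‖φ ω + f ω‖ₑ ∂μ := by
  have hmul : ∫⁻ ω in E, ‖starRingEnd ℂ (φ ω) * (φ ω + f ω)‖ₑ ∂μ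
      = ‖C‖ₑ * ∫⁻ ω in E, ‖φ ω + f ω‖ₑ ∂μ := by
    rw [← lintegral_const_mul' _ _ enorm_ne_top]
    refine setLIntegral_congr_fun hE fun ω hω => ?_
    rw [enorm_mul, RCLike.enorm_conj, ← enorm_norm (φ ω), hOn ω hω]
  have hscaled : ‖C‖ₑ * (‖C‖ₑ * μ E) ≤ ‖C‖ₑ * ∫⁻ ω in E, ‖φ ω + f ω‖ₑ ∂μ :=
    calc ‖C‖ₑ * (‖C‖ₑ * μ E)
        = ‖∫ ω in E, starRingEnd ℂ (φ ω) * (φ ω + f ω) ∂μ‖ₑ := by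
          rw [setIntegral_conj_mul_add hE hOn hOff hint horth,
            ← enorm_norm (((C ^ 2 * μ.real E : ℝ) : ℂ)), Complex.norm_real, enorm_norm,
            enorm_mul, enorm_pow, Real.enorm_of_nonneg measureReal_nonneg, ofReal_measureReal,
            sq, mul_assoc]
      _ ≤ _ := enorm_integral_le_lintegral_enorm _
      _ = _ := hmul
  exact (ENNReal.mul_le_mul_iff_right (enorm_ne_zero.2 hC) enorm_ne_top).1 hscaled

theorem setLIntegral_enorm_le_eLpNorm_mul_rpow {F : Type*} [NormedAddCommGroup F] {g : Ω → F}
    {p : ℝ≥0∞} (hp : 1 ≤ p)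
    (hg : AEStronglyMeasurable g μ) :
    ∫⁻ ω in E, ‖g ω‖ₑ ∂μ ≤ eLpNorm g p μ * μ E ^ (1 - 1 / p.toReal) := by
  have hHolder := eLpNorm_le_eLpNorm_mul_rpow_measure_univ hp (hg.restrict (s := E))
  rw [eLpNorm_one_eq_lintegral_enorm, Measure.restrict_apply_univ, ENNReal.toReal_one,
    div_one] at hHolder
  exact hHolder.trans (by gcongr; exact Measure.restrict_le_self)

theorem eLpNorm_le_eLpNorm_add_of_integral_mul_conj_eq_zero [IsFiniteMeasure μ] {p : ℝ≥0∞}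
    (hp : 1 ≤ p) (hE : MeasurableSet E) (hE0 : μ E ≠ 0)
    (hOn : ∀ ω ∈ E, ‖φ ω‖ = C) (hOff : ∀ ω ∉ E, φ ω = 0) (hC : C ≠ 0)
    (hg : AEStronglyMeasurable (φ + f) μ)
    (hint : Integrable (fun ω => f ω * starRingEnd ℂ (φ ω)) μ)
    (horth : ∫ ω, f ω * starRingEnd ℂ (φ ω) ∂μ = 0) :
    eLpNorm φ p μ ≤ eLpNorm (φ + f) p μ := by
  have hrpow_ne_zero : μ E ^ (1 - 1 / p.toReal) ≠ 0 := by
    simp [ENNReal.rpow_eq_zero_iff, hE0, measure_ne_top μ E]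
  have hrpow_ne_top : μ E ^ (1 - 1 / p.toReal) ≠ ∞ := by
    simp [ENNReal.rpow_eq_top_iff, hE0, measure_ne_top μ E]
  rw [← ENNReal.mul_le_mul_iff_left hrpow_ne_zero hrpow_ne_top]
  calc eLpNorm φ p μ * μ E ^ (1 - 1 / p.toReal)
      ≤ ‖C‖ₑ * μ E ^ (1 / p.toReal) * μ E ^ (1 - 1 / p.toReal) := by
        gcongr; exact eLpNorm_le_of_norm_eq_on hOn hOff p
    _ = ‖C‖ₑ * μ E := by
        rw [mul_assoc, ← ENNReal.rpow_add _ _ hE0 (measure_ne_top μ E), add_sub_cancel,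
          ENNReal.rpow_one]
    _ ≤ ∫⁻ ω in E, ‖φ ω + f ω‖ₑ ∂μ :=
        enorm_mul_measure_le_setLIntegral_enorm_add hE hOn hOff hC hint horth
    _ ≤ eLpNorm (φ + f) p μ * μ E ^ (1 - 1 / p.toReal) :=
        setLIntegral_enorm_le_eLpNorm_mul_rpow hp hg

end OrthogonalIndicator

open OrthogonalIndicator in
theorem stmt_10_general {Ω : Type*} [MeasurableSpace Ω] (μ : Measure Ω) [IsProbabilityMeasure μ]
    (p : ℝ≥0∞) (hp : 1 ≤ p)
    (φ : Ω → ℂ) (hφ : Measurable φ)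
    (C : ℝ) (hC : 0 < C) (E : Set Ω) (hE : MeasurableSet E) (hEpos : 0 < μ E)
    (hOn : ∀ ω ∈ E, ‖φ ω‖ = C) (hOff : ∀ ω ∉ E, φ ω = 0)
    (f : Ω → ℂ) (hf : Measurable f) (hfb : ∃ M : ℝ, ∀ ω, ‖f ω‖ ≤ M)
    (horth : ∫ ω, f ω * (starRingEnd ℂ) (φ ω) ∂μ = 0) :
    eLpNorm φ p μ ≤ eLpNorm (φ + f) p μ := by
  obtain ⟨M, hM⟩ := hfb
  have hφC : ∀ ω, ‖starRingEnd ℂ (φ ω)‖ ≤ C := fun ω => by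
    by_cases hω : ω ∈ E
    · rw [RCLike.norm_conj, hOn ω hω]
    · simp [hOff ω hω, hC.le]
  have hint : Integrable (fun ω => f ω * starRingEnd ℂ (φ ω)) μ :=
    (Integrable.of_bound hf.aestronglyMeasurable M (ae_of_all _ hM)).mul_bdd
      (Complex.continuous_conj.comp_aestronglyMeasurable hφ.aestronglyMeasurable)
      (ae_of_all _ hφC)
  exact eLpNorm_le_eLpNorm_add_of_integral_mul_conj_eq_zero hp hE hEpos.ne' hOn hOff hC.ne'
    (hφ.add hf).aestronglyMeasurable hint horth

theorem stmt_10 {Ω : Type*} [MeasurableSpace Ω] (μ : Measure Ω) [IsProbabilityMeasure μ]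
    (p : ℝ≥0∞) (hp : 1 ≤ p) (hp2 : p ≠ 2)
    (φ : Ω → ℂ) (hφ : Measurable φ)
    (C : ℝ) (hC : 0 < C) (E : Set Ω) (hE : MeasurableSet E) (hEpos : 0 < μ E)
    (hOn : ∀ ω ∈ E, ‖φ ω‖ = C) (hOff : ∀ ω ∉ E, φ ω = 0)
    (f : Ω → ℂ) (hf : Measurable f) (hfb : ∃ M : ℝ, ∀ ω, ‖f ω‖ ≤ M)
    (horth : ∫ ω, f ω * (starRingEnd ℂ) (φ ω) ∂μ = 0) :
    eLpNorm φ p μ ≤ eLpNorm (φ + f) p μ :=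
  stmt_10_general μ p hp φ hφ C hC E hE hEpos hOn hOff f hf hfb horth
end

section
/- Let (Ω, μ) be a probability space and let φ : Ω → ℂ be in L²(μ) with |φ(ω)| ∈ {0, C} a.e. for some constant C > 0, and φ not a.e. zero. Then the rank-one projection P f = (⟨f, φ⟩ / ‖φ‖₂²)·φ satisfies ‖P f‖_{L^p} ≤ ‖f‖_{L^p} for all f ∈ L^∞(μ) and all 1 ≤ p ≤ ∞. -/
/-!
By Hölder's inequality, `|⟨f, φ⟩| ≤ ‖f‖_p ‖φ‖_q` for the conjugate exponent `q`, so
`‖P f‖_p ≤ ‖f‖_p · ‖φ‖_p ‖φ‖_q / ‖φ‖₂²`. When `|φ| = C · 1_A` a.e. one has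
`‖φ‖_r ≤ |C| μ(A)^{1/r}` for every `r`, with equality for `r = 2`, and `1/p + 1/q = 1` turns this
into `‖φ‖_p ‖φ‖_q ≤ C² μ(A) = ‖φ‖₂²`: functions of constant modulus are extremal for Hölder.
-/

open MeasureTheory
open scoped ENNReal

namespace ENNReal.HolderConjugate

lemma one_div_toReal_add_one_div_toReal {p q : ℝ≥0∞} [p.HolderConjugate q] :
    1 / p.toReal + 1 / q.toReal = 1 := by
  have h := congrArg ENNReal.toReal (inv_add_inv_eq_one p q)
  rwa [ENNReal.toReal_add (ENNReal.inv_ne_top.2 (ne_zero p q))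
    (ENNReal.inv_ne_top.2 (ne_zero q p)), ENNReal.toReal_inv, ENNReal.toReal_inv,
    ENNReal.toReal_one, ← one_div, ← one_div] at h

end ENNReal.HolderConjugate

section

variable {Ω : Type*} [MeasurableSpace Ω] {μ : Measure Ω}

lemma MeasureTheory.AEStronglyMeasurable.exists_norm_ae_eq_indicator {E : Type*}
    [NormedAddCommGroup E] {φ : Ω → E} (hφ : AEStronglyMeasurable φ μ) {C : ℝ}
    (hval : ∀ᵐ ω ∂μ, ‖φ ω‖ = 0 ∨ ‖φ ω‖ = C) :
    ∃ A, MeasurableSet A ∧ ∀ᵐ ω ∂μ, ‖φ ω‖ = A.indicator (fun _ => C) ω := by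
  refine ⟨{ω | ‖hφ.mk φ ω‖ = C},
    hφ.stronglyMeasurable_mk.norm.measurable (measurableSet_singleton C), ?_⟩
  filter_upwards [hval, hφ.ae_eq_mk] with ω hω hmk
  rw [hmk] at hω ⊢
  by_cases h : ‖hφ.mk φ ω‖ = C
  · simp [h]
  · simpa [h] using hω.resolve_right h

lemma eLpNorm_mul_eLpNorm_le_eLpNorm_two_sq_of_norm_eq_zero_or_eq {E : Type*}
    [NormedAddCommGroup E] {φ : Ω → E} (hφ : AEStronglyMeasurable φ μ) {C : ℝ}
    (hval : ∀ᵐ ω ∂μ, ‖φ ω‖ = 0 ∨ ‖φ ω‖ = C) (p q : ℝ≥0∞) [p.HolderConjugate q] :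
    eLpNorm φ p μ * eLpNorm φ q μ ≤ eLpNorm φ 2 μ ^ 2 := by
  obtain ⟨A, hA, hind⟩ := hφ.exists_norm_ae_eq_indicator hval
  have hnorm (r : ℝ≥0∞) : eLpNorm φ r μ = eLpNorm (A.indicator fun _ => C) r μ := by
    refine eLpNorm_congr_norm_ae ?_
    filter_upwards [hind] with ω h
    rw [← h, norm_norm]
  have hsq : (μ A ^ (1 / (2 : ℝ≥0∞).toReal)) ^ 2 = μ A := by
    rw [← ENNReal.rpow_natCast, ← ENNReal.rpow_mul]
    norm_num
  rw [hnorm, hnorm, hnorm, eLpNorm_indicator_const hA two_ne_zero ENNReal.ofNat_ne_top]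
  calc eLpNorm (A.indicator fun _ => C) p μ * eLpNorm (A.indicator fun _ => C) q μ
      ≤ (‖C‖ₑ * μ A ^ (1 / p.toReal)) * (‖C‖ₑ * μ A ^ (1 / q.toReal)) := by
        gcongr <;> exact eLpNorm_indicator_const_le C _
    _ = ‖C‖ₑ ^ 2 * μ A ^ (1 / p.toReal + 1 / q.toReal) := by
        rw [ENNReal.rpow_add_of_nonneg _ _ (by positivity) (by positivity)]; ring
    _ = (‖C‖ₑ * μ A ^ (1 / (2 : ℝ≥0∞).toReal)) ^ 2 := by
        rw [ENNReal.HolderConjugate.one_div_toReal_add_one_div_toReal, mul_pow, hsq,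
          ENNReal.rpow_one]

lemma enorm_integral_mul_conj_le {𝕜 : Type*} [RCLike 𝕜] {f φ : Ω → 𝕜}
    (hf : AEStronglyMeasurable f μ) (hφ : AEStronglyMeasurable φ μ) (p q : ℝ≥0∞)
    [p.HolderConjugate q] :
    ‖∫ x, f x * starRingEnd 𝕜 (φ x) ∂μ‖ₑ ≤ eLpNorm f p μ * eLpNorm φ q μ := by
  calc ‖∫ x, f x * starRingEnd 𝕜 (φ x) ∂μ‖ₑ
      ≤ eLpNorm (fun x => f x * (star φ) x) 1 μ := by
        rw [eLpNorm_one_eq_lintegral_enorm]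
        exact enorm_integral_le_lintegral_enorm _
    _ ≤ 1 * eLpNorm f p μ * eLpNorm (star φ) q μ :=
        eLpNorm_le_eLpNorm_mul_eLpNorm'_of_norm hf hφ.star (· * ·) 1
          (.of_forall fun x => by simp)
    _ = eLpNorm f p μ * eLpNorm φ q μ := by rw [one_mul, eLpNorm_star]

theorem eLpNorm_rankOneProjection_le {f φ : Ω → ℂ} (hφ : MemLp φ 2 μ) (hφ0 : ¬ φ =ᵐ[μ] 0)
    (hf : AEStronglyMeasurable f μ) (p q : ℝ≥0∞) [p.HolderConjugate q]
    (hflat : eLpNorm φ p μ * eLpNorm φ q μ ≤ eLpNorm φ 2 μ ^ 2) :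
    eLpNorm (fun ω =>
        ((∫ x, f x * (starRingEnd ℂ) (φ x) ∂μ) / ((eLpNorm φ 2 μ).toReal ^ 2 : ℂ)) * φ ω)
      p μ ≤ eLpNorm f p μ := by
  set N := eLpNorm φ 2 μ
  set I := ∫ x, f x * (starRingEnd ℂ) (φ x) ∂μ
  have hN0 : N ^ 2 ≠ 0 := pow_ne_zero 2 fun h => hφ0 ((eLpNorm_eq_zero_iff hφ.1 two_ne_zero).1 h)
  have hNtop : N ^ 2 ≠ ∞ := ENNReal.pow_ne_top hφ.eLpNorm_ne_top
  have hdenom : ‖(N.toReal : ℂ) ^ 2‖ₑ = N ^ 2 := by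
    rw [enorm_pow, ← ofReal_norm, Complex.norm_real, ofReal_norm,
      Real.enorm_toReal hφ.eLpNorm_ne_top]
  have hd0 : (N.toReal : ℂ) ^ 2 ≠ 0 := fun h => hN0 (by rw [← hdenom, h, enorm_zero])
  calc eLpNorm (fun ω => (I / (N.toReal ^ 2 : ℂ)) * φ ω) p μ
      = ‖I‖ₑ / N ^ 2 * eLpNorm φ p μ := by
        change eLpNorm ((I / (N.toReal : ℂ) ^ 2) • φ) p μ = _
        rw [eLpNorm_const_smul, div_eq_mul_inv, enorm_mul, enorm_inv hd0, hdenom,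
          ← div_eq_mul_inv]
    _ ≤ eLpNorm f p μ * eLpNorm φ q μ / N ^ 2 * eLpNorm φ p μ := by
        gcongr; exact enorm_integral_mul_conj_le hf hφ.1 p q
    _ = eLpNorm f p μ * (eLpNorm φ p μ * eLpNorm φ q μ) / N ^ 2 := by
        simp only [div_eq_mul_inv]; ring
    _ ≤ eLpNorm f p μ * N ^ 2 / N ^ 2 := by gcongr
    _ = eLpNorm f p μ := ENNReal.mul_div_cancel_right hN0 hNtop

end

theorem stmt_11_general {Ω : Type*} [MeasurableSpace Ω] (μ : Measure Ω)
    (φ : Ω → ℂ) (hφ2 : MemLp φ 2 μ)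
    (C : ℝ)
    (hval : ∀ᵐ ω ∂μ, ‖φ ω‖ = 0 ∨ ‖φ ω‖ = C)
    (hnz : ¬ φ =ᵐ[μ] 0)
    (p : ℝ≥0∞) (hp : 1 ≤ p)
    (f : Ω → ℂ) (hf : Measurable f) :
    eLpNorm (fun ω =>
        ((∫ x, f x * (starRingEnd ℂ) (φ x) ∂μ) / ((eLpNorm φ 2 μ).toReal ^ 2 : ℂ)) * φ ω)
      p μ ≤ eLpNorm f p μ := by
  have := ENNReal.HolderConjugate.conjExponent hp
  exact eLpNorm_rankOneProjection_le hφ2 hnz hf.aestronglyMeasurable p p.conjExponent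
    (eLpNorm_mul_eLpNorm_le_eLpNorm_two_sq_of_norm_eq_zero_or_eq hφ2.1 hval p p.conjExponent)

theorem stmt_11 {Ω : Type*} [MeasurableSpace Ω] (μ : Measure Ω) [IsProbabilityMeasure μ]
    (φ : Ω → ℂ) (hφ2 : MemLp φ 2 μ)
    (C : ℝ) (hC : 0 < C)
    (hval : ∀ᵐ ω ∂μ, ‖φ ω‖ = 0 ∨ ‖φ ω‖ = C)
    (hnz : ¬ φ =ᵐ[μ] 0)
    (p : ℝ≥0∞) (hp : 1 ≤ p)
    (f : Ω → ℂ) (hf : Measurable f) (hfb : ∃ M : ℝ, ∀ ω, ‖f ω‖ ≤ M) :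
    eLpNorm (fun ω =>
        ((∫ x, f x * (starRingEnd ℂ) (φ x) ∂μ) / ((eLpNorm φ 2 μ).toReal ^ 2 : ℂ)) * φ ω)
      p μ ≤ eLpNorm f p μ :=
  stmt_11_general μ φ hφ2 C hval hnz p hp f hf
end

section
/- Let (Ω, μ) be a probability space and φ : Ω → ℂ a nonvanishing measurable function in L¹(μ), and let 2 < p < ∞. Suppose that for all measurable sets F₁, F₂ of positive measure, (∫_{F₁} |φ|^{p-1} dμ)/(∫_{F₁} |φ| dμ) = (∫_{F₂} |φ|^{p-1} dμ)/(∫_{F₂} |φ| dμ), with all integrals finite and positive. Then |φ| is a.e. equal to a constant C > 0. -/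
/-!
Comparing an arbitrary set with the whole space, the constant ratio hypothesis says
`∫_F |φ|^{p-1} = R ∫_F |φ|` for every measurable `F`, where `R` is the ratio on `Ω`. Two integrable
functions with the same integral over every measurable set agree a.e., so `|φ|^{p-1} = R |φ|` a.e.;
since `φ ≠ 0` a.e. this gives `|φ|^{p-2} = R`, i.e. `|φ| = R^{1/(p-2)}` a.e.
-/

open MeasureTheory

theorem ae_eq_const_mul_of_forall_setIntegral_eq {α : Type*} [MeasurableSpace α] {μ : Measure α}
    {f g : α → ℝ} (c : ℝ) (hf : Integrable f μ) (hg : Integrable g μ)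
    (h : ∀ s, MeasurableSet s → 0 < μ s → ∫ x in s, f x ∂μ = c * ∫ x in s, g x ∂μ) :
    f =ᵐ[μ] fun x => c * g x := by
  refine hf.ae_eq_of_forall_setIntegral_eq _ _ (hg.const_mul c) fun s hs _ => ?_
  rcases (zero_le (a := μ s)).eq_or_lt with hμs | hμs
  · simp [Measure.restrict_eq_zero.2 hμs.symm]
  · rw [integral_const_mul, h s hs hμs]

theorem eq_rpow_inv_of_rpow_sub_one_eq_mul {x R p : ℝ} (hx : 0 < x) (hp : p ≠ 2)
    (h : x ^ (p - 1) = R * x) : x = R ^ (p - 2)⁻¹ := by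
  have hR : x ^ (p - 2) = R := by
    rw [show p - 1 = p - 2 + 1 by ring, Real.rpow_add_one hx.ne'] at h
    exact mul_right_cancel₀ hx.ne' h
  rw [← hR, Real.rpow_rpow_inv hx.le (sub_ne_zero.2 hp)]

theorem stmt_14_general {Ω : Type*} [MeasurableSpace Ω] (μ : Measure Ω) [IsProbabilityMeasure μ]
    (φ : Ω → ℂ) (hφ1 : Integrable φ μ)
    (hnv : ∀ᵐ ω ∂μ, φ ω ≠ 0)
    (p : ℝ) (hp : 2 < p)
    (hfin : ∀ F : Set Ω, MeasurableSet F → 0 < μ F →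
      (IntegrableOn (fun ω => ‖φ ω‖ ^ (p - 1)) F μ ∧
        0 < ∫ ω in F, ‖φ ω‖ ^ (p - 1) ∂μ ∧
        0 < ∫ ω in F, ‖φ ω‖ ∂μ))
    (hratio : ∀ F₁ F₂ : Set Ω, MeasurableSet F₁ → MeasurableSet F₂ →
      0 < μ F₁ → 0 < μ F₂ →
      (∫ ω in F₁, ‖φ ω‖ ^ (p - 1) ∂μ) / (∫ ω in F₁, ‖φ ω‖ ∂μ) =
      (∫ ω in F₂, ‖φ ω‖ ^ (p - 1) ∂μ) / (∫ ω in F₂, ‖φ ω‖ ∂μ)) :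
    ∃ C : ℝ, 0 < C ∧ ∀ᵐ ω ∂μ, ‖φ ω‖ = C := by
  have hμ : 0 < μ Set.univ := by simp
  obtain ⟨hint, hnum, hden⟩ := hfin Set.univ MeasurableSet.univ hμ
  rw [integrableOn_univ] at hint
  rw [Measure.restrict_univ] at hnum hden
  set R := (∫ ω, ‖φ ω‖ ^ (p - 1) ∂μ) / ∫ ω, ‖φ ω‖ ∂μ
  have hprop : (fun ω => ‖φ ω‖ ^ (p - 1)) =ᵐ[μ] fun ω => R * ‖φ ω‖ := by
    refine ae_eq_const_mul_of_forall_setIntegral_eq R hint hφ1.norm fun s hs hμs => ?_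
    have hsR := hratio s Set.univ hs MeasurableSet.univ hμs hμ
    rw [Measure.restrict_univ] at hsR
    exact (div_eq_iff (hfin s hs hμs).2.2.ne').1 hsR
  refine ⟨R ^ (p - 2)⁻¹, by positivity, ?_⟩
  filter_upwards [hprop, hnv] with ω hω hne
  exact eq_rpow_inv_of_rpow_sub_one_eq_mul (norm_pos_iff.2 hne) hp.ne' hω

theorem stmt_14 {Ω : Type*} [MeasurableSpace Ω] (μ : Measure Ω) [IsProbabilityMeasure μ]
    (φ : Ω → ℂ) (hφ : Measurable φ) (hφ1 : Integrable φ μ)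
    (hnv : ∀ᵐ ω ∂μ, φ ω ≠ 0)
    (p : ℝ) (hp : 2 < p)
    (hfin : ∀ F : Set Ω, MeasurableSet F → 0 < μ F →
      (IntegrableOn (fun ω => ‖φ ω‖ ^ (p - 1)) F μ ∧
        0 < ∫ ω in F, ‖φ ω‖ ^ (p - 1) ∂μ ∧
        0 < ∫ ω in F, ‖φ ω‖ ∂μ))
    (hratio : ∀ F₁ F₂ : Set Ω, MeasurableSet F₁ → MeasurableSet F₂ →
      0 < μ F₁ → 0 < μ F₂ →
      (∫ ω in F₁, ‖φ ω‖ ^ (p - 1) ∂μ) / (∫ ω in F₁, ‖φ ω‖ ∂μ) =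
      (∫ ω in F₂, ‖φ ω‖ ^ (p - 1) ∂μ) / (∫ ω in F₂, ‖φ ω‖ ∂μ)) :
    ∃ C : ℝ, 0 < C ∧ ∀ᵐ ω ∂μ, ‖φ ω‖ = C :=
  stmt_14_general μ φ hφ1 hnv p hp hfin hratio
end
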